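/- (Lemma 6.3) Let f : ℝ^n → ℝ be differentiable and coordinate-wise smooth with parameters (L_1,…,L_n), each L_i > 0. Fix β ∈ [0,1], set α := (1−β)/2, S_α := Σ_{i=1}^n L_i^α, p_i := L_i^α/S_α. Fix η > 0 and vectors z_k, x_{k+1} ∈ ℝ^n. For each i define y^{(i)} := x_{k+1} − (1/L_i)·∇_i f(x_{k+1})·e_i and z^{(i)} := z_k − (η/(p_i·L_i^β))·∇_i f(x_{k+1})·e_i. Then for every u ∈ ℝ^n: η·⟨∇f(x_{k+1}), z_k − u⟩ ≤ η²·S_α²·( f(x_{k+1}) − Σ_{i=1}^n p_i·f(y^{(i)}) ) + (1/2)‖z_k − u‖²_{L_β} − (1/2)·Σ_{i=1}^n p_i·‖z^{(i)} − u‖²_{L_β}. -/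

import Mathlib

/-!
Along each coordinate line, coordinate-wise smoothness gives the descent estimate
`|f (x + δ eᵢ) - f x - ∇ᵢf(x) δ| ≤ Lᵢ δ² / 2`, so the gradient step `y⁽ⁱ⁾` decreases `f` by at
least `(∇ᵢf)² / (2 Lᵢ)`. Expanding the weighted norm, the mirror step `z⁽ⁱ⁾` satisfies
`(pᵢ/2) (‖zₖ - u‖² - ‖z⁽ⁱ⁾ - u‖²) = η ∇ᵢf (zₖ - u)ᵢ - η² (∇ᵢf)² / (2 pᵢ Lᵢ^β)`.
The choice `α = (1 - β)/2` makes `S_α² pᵢ² Lᵢ^β = Lᵢ`, so the last term equals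
`η² S_α² pᵢ (∇ᵢf)² / (2 Lᵢ) ≤ η² S_α² pᵢ (f x - f y⁽ⁱ⁾)`. Summing over `i` with `∑ pᵢ = 1` gives
the claim.
-/

/-- The i-th standard basis vector of ℝ^n. -/
def basisVec {n : ℕ} (i : Fin n) : Fin n → ℝ := Pi.single i 1

/-- The i-th partial derivative ∇_i f(x). -/
noncomputable def coordGrad {n : ℕ} (f : (Fin n → ℝ) → ℝ) (x : Fin n → ℝ) (i : Fin n) : ℝ :=
  fderiv ℝ f x (basisVec i)

/-- f is coordinate-wise smooth with parameters (L_1, …, L_n):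
`|∇_i f(x + δ e_i) − ∇_i f(x)| ≤ L_i |δ|` for all x, δ, i. -/
def CoordSmooth {n : ℕ} (f : (Fin n → ℝ) → ℝ) (L : Fin n → ℝ) : Prop :=
  ∀ (x : Fin n → ℝ) (δ : ℝ) (i : Fin n),
    |coordGrad f (x + δ • basisVec i) i - coordGrad f x i| ≤ L i * |δ|

/-- Weighted squared norm ‖v‖²_{L_β} := Σ_i L_i^β · v_i². -/
noncomputable def wnormSq {n : ℕ} (L : Fin n → ℝ) (β : ℝ) (v : Fin n → ℝ) : ℝ :=
  ∑ i, L i ^ β * v i ^ 2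

lemma abs_sub_sub_deriv_mul_le_of_nonneg {g g' : ℝ → ℝ} {L δ : ℝ}
    (hg : ∀ t, HasDerivAt g (g' t) t) (hg' : ∀ t, |g' t - g' 0| ≤ L * |t|) (hδ : 0 ≤ δ) :
    |g δ - g 0 - g' 0 * δ| ≤ L / 2 * δ ^ 2 := by
  have hrem : ∀ t, HasDerivAt (fun t => g t - g 0 - g' 0 * t) (g' t - g' 0) t := fun t =>
    (((hg t).sub_const (g 0)).sub ((hasDerivAt_id t).const_mul (g' 0))).congr_deriv (by ring)
  have hB : ∀ t, HasDerivAt (fun t : ℝ => L / 2 * t ^ 2) (L * t) t := fun t =>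
    ((hasDerivAt_pow 2 t).const_mul (L / 2)).congr_deriv (by ring)
  refine image_norm_le_of_norm_deriv_right_le_deriv_boundary (f := fun t => g t - g 0 - g' 0 * t)
    (fun t _ => (hrem t).continuousAt.continuousWithinAt) (fun t _ => (hrem t).hasDerivWithinAt)
    (by simp) hB (fun t ht => ?_) ⟨hδ, le_rfl⟩
  simpa [Real.norm_eq_abs, abs_of_nonneg ht.1] using hg' t

lemma abs_sub_sub_deriv_mul_le {g g' : ℝ → ℝ} {L : ℝ}
    (hg : ∀ t, HasDerivAt g (g' t) t) (hg' : ∀ t, |g' t - g' 0| ≤ L * |t|) (δ : ℝ) :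
    |g δ - g 0 - g' 0 * δ| ≤ L / 2 * δ ^ 2 := by
  rcases le_total 0 δ with hδ | hδ
  · exact abs_sub_sub_deriv_mul_le_of_nonneg hg hg' hδ
  · have hneg : ∀ t, HasDerivAt (fun t => g (-t)) (-g' (-t)) t := fun t =>
      ((hg (-t)).comp t (hasDerivAt_neg t)).congr_deriv (by ring)
    have := abs_sub_sub_deriv_mul_le_of_nonneg hneg (L := L)
      (fun t => by simpa [abs_sub_comm, neg_add_eq_sub] using hg' (-t)) (neg_nonneg.2 hδ)
    simpa using this

lemma wnormSq_sub_smul_basisVec {n : ℕ} (L : Fin n → ℝ) (β : ℝ) (v : Fin n → ℝ) (i : Fin n)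
    (c : ℝ) :
    wnormSq L β (v - c • basisVec i)
      = wnormSq L β v - 2 * L i ^ β * c * v i + L i ^ β * c ^ 2 := by
  have hterm : ∀ j, L j ^ β * (v - c • basisVec i) j ^ 2
      = L j ^ β * v j ^ 2 + if j = i then L i ^ β * c ^ 2 - 2 * L i ^ β * c * v i else 0 := by
    intro j
    rcases eq_or_ne j i with rfl | hji
    · simp [basisVec]; ring
    · simp [basisVec, hji]
  simp only [wnormSq, hterm, Finset.sum_add_distrib, Finset.sum_ite_eq', Finset.mem_univ, if_true]
  ring

lemma sq_mul_rpow_div_sq_mul_rpow {a β : ℝ} (ha : 0 < a) {S : ℝ} (hS : S ≠ 0) :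
    S ^ 2 * (a ^ ((1 - β) / 2) / S) ^ 2 * a ^ β = a := by
  rw [div_pow, mul_div_cancel₀ _ (pow_ne_zero 2 hS), ← Real.rpow_natCast, ← Real.rpow_mul ha.le,
    ← Real.rpow_add ha]
  norm_num

namespace CoordSmooth

variable {n : ℕ} {f : (Fin n → ℝ) → ℝ} {L : Fin n → ℝ}

lemma abs_sub_sub_coordGrad_mul_le (hsmooth : CoordSmooth f L) (hf : Differentiable ℝ f)
    (x : Fin n → ℝ) (i : Fin n) (δ : ℝ) :
    |f (x + δ • basisVec i) - f x - coordGrad f x i * δ| ≤ L i / 2 * δ ^ 2 := by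
  have hline : ∀ t : ℝ, HasDerivAt (fun s : ℝ => f (x + s • basisVec i))
      (coordGrad f (x + t • basisVec i) i) t := fun t =>
    ((hf _).hasFDerivAt.comp_hasDerivAt t
      (((hasDerivAt_id t).smul_const (basisVec i)).const_add x)).congr_deriv (by simp [coordGrad])
  simpa using abs_sub_sub_deriv_mul_le hline (fun t => by simpa using hsmooth x t i) δ

lemma le_sub_coordGrad_sq_div (hsmooth : CoordSmooth f L) (hf : Differentiable ℝ f)
    {i : Fin n} (hLi : 0 < L i) (x : Fin n → ℝ) :
    f (x - (1 / L i * coordGrad f x i) • basisVec i) ≤ f x - coordGrad f x i ^ 2 / (2 * L i) := by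
  set G := coordGrad f x i
  have h := (abs_le.1 (hsmooth.abs_sub_sub_coordGrad_mul_le hf x i (-(1 / L i * G)))).2
  rw [neg_smul, ← sub_eq_add_neg] at h
  have hstep : G * -(1 / L i * G) + L i / 2 * (-(1 / L i * G)) ^ 2 = -(G ^ 2 / (2 * L i)) := by
    field_simp; ring
  linarith

lemma mul_coordGrad_le_descent_add_mirror (hsmooth : CoordSmooth f L) (hf : Differentiable ℝ f)
    {i : Fin n} (hLi : 0 < L i) {β S q : ℝ} (hq : 0 ≤ q) (hSq : S ^ 2 * q ^ 2 * L i ^ β = L i)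
    (η : ℝ) (x v : Fin n → ℝ) :
    η * (coordGrad f x i * v i)
      ≤ η ^ 2 * S ^ 2 * (q * (f x - f (x - (1 / L i * coordGrad f x i) • basisVec i)))
        + 1 / 2 * (q * wnormSq L β v)
        - 1 / 2 * (q * wnormSq L β (v - (η / (q * L i ^ β) * coordGrad f x i) • basisVec i)) := by
  set G := coordGrad f x i
  have hdescent := hsmooth.le_sub_coordGrad_sq_div hf hLi x
  have hqw : q * L i ^ β ≠ 0 := fun h => hLi.ne' <| by
    rw [← hSq]; linear_combination S ^ 2 * q * h
  have hmirror : 1 / 2 * (q * wnormSq L β v)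
      - 1 / 2 * (q * wnormSq L β (v - (η / (q * L i ^ β) * G) • basisVec i))
      = η * (G * v i) - η ^ 2 * S ^ 2 * q * (G ^ 2 / (2 * L i)) := by
    have hq0 := left_ne_zero_of_mul hqw
    have hw0 := right_ne_zero_of_mul hqw
    rw [wnormSq_sub_smul_basisVec]
    field_simp
    linear_combination η ^ 2 * G ^ 2 * hSq
  have hgap : η ^ 2 * S ^ 2 * q * (G ^ 2 / (2 * L i))
      ≤ η ^ 2 * S ^ 2 * (q * (f x - f (x - (1 / L i * G) • basisVec i))) := by
    rw [← mul_assoc]; gcongr; linarith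
  linarith

end CoordSmooth

theorem stmt_10_general (n : ℕ) (f : (Fin n → ℝ) → ℝ) (L : Fin n → ℝ)
    (hf : Differentiable ℝ f) (hL : ∀ i, 0 < L i)
    (hsmooth : CoordSmooth f L)
    (β : ℝ)
    (α Sα : ℝ) (hα : α = (1 - β) / 2) (hS : Sα = ∑ i, L i ^ α)
    (p : Fin n → ℝ) (hp : ∀ i, p i = L i ^ α / Sα)
    (η : ℝ)
    (zk xk1 : Fin n → ℝ)
    (Y Z : Fin n → Fin n → ℝ)
    (hY : ∀ i, Y i = xk1 - (1 / L i * coordGrad f xk1 i) • basisVec i)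
    (hZ : ∀ i, Z i = zk - (η / (p i * L i ^ β) * coordGrad f xk1 i) • basisVec i)
    (u : Fin n → ℝ) :
    η * (∑ i, coordGrad f xk1 i * (zk i - u i))
      ≤ η ^ 2 * Sα ^ 2 * (f xk1 - ∑ i, p i * f (Y i))
        + (1 / 2) * wnormSq L β (zk - u)
        - (1 / 2) * ∑ i, p i * wnormSq L β (Z i - u) := by
  obtain _ | _ := isEmpty_or_nonempty (Fin n)
  · simp [hS, wnormSq]
  have hSpos : 0 < Sα := hS ▸ Finset.sum_pos (fun i _ => Real.rpow_pos_of_pos (hL i) α)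
    Finset.univ_nonempty
  have hpsum : ∑ i, p i = 1 := by
    simp only [hp, ← Finset.sum_div, ← hS, div_self hSpos.ne']
  have hstep : ∀ i, η * (coordGrad f xk1 i * (zk - u) i)
      ≤ η ^ 2 * Sα ^ 2 * (p i * (f xk1 - f (Y i)))
        + 1 / 2 * (p i * wnormSq L β (zk - u)) - 1 / 2 * (p i * wnormSq L β (Z i - u)) := by
    intro i
    have hp0 : 0 ≤ p i := by rw [hp]; have := hL i; positivity
    have hSp : Sα ^ 2 * p i ^ 2 * L i ^ β = L i := by
      rw [hp, hα]; exact sq_mul_rpow_div_sq_mul_rpow (hL i) hSpos.ne'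
    rw [hY, hZ, sub_right_comm]
    exact hsmooth.mul_coordGrad_le_descent_add_mirror hf (hL i) hp0 hSp η xk1 (zk - u)
  calc η * (∑ i, coordGrad f xk1 i * (zk i - u i))
      = ∑ i, η * (coordGrad f xk1 i * (zk - u) i) := Finset.mul_sum _ _ _
    _ ≤ _ := Finset.sum_le_sum fun i _ => hstep i
    _ = _ := by
      simp only [Finset.sum_add_distrib, Finset.sum_sub_distrib, ← Finset.mul_sum, ← Finset.sum_mul,
        mul_sub, hpsum, one_mul]

/-- Lemma 6.3: combining the gradient-descent and mirror-descent guarantees of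
NU_ACDM^ns in expectation over the randomly sampled coordinate. -/
theorem stmt_10 (n : ℕ) (f : (Fin n → ℝ) → ℝ) (L : Fin n → ℝ)
    (hf : Differentiable ℝ f) (hL : ∀ i, 0 < L i)
    (hsmooth : CoordSmooth f L)
    (β : ℝ) (hβ : β ∈ Set.Icc (0 : ℝ) 1)
    (α Sα : ℝ) (hα : α = (1 - β) / 2) (hS : Sα = ∑ i, L i ^ α)
    (p : Fin n → ℝ) (hp : ∀ i, p i = L i ^ α / Sα)
    (η : ℝ) (hη : 0 < η)
    (zk xk1 : Fin n → ℝ)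
    (Y Z : Fin n → Fin n → ℝ)
    (hY : ∀ i, Y i = xk1 - (1 / L i * coordGrad f xk1 i) • basisVec i)
    (hZ : ∀ i, Z i = zk - (η / (p i * L i ^ β) * coordGrad f xk1 i) • basisVec i)
    (u : Fin n → ℝ) :
    η * (∑ i, coordGrad f xk1 i * (zk i - u i))
      ≤ η ^ 2 * Sα ^ 2 * (f xk1 - ∑ i, p i * f (Y i))
        + (1 / 2) * wnormSq L β (zk - u)
        - (1 / 2) * ∑ i, p i * wnormSq L β (Z i - u) :=
  stmt_10_general n f L hf hL hsmooth β α Sα hα hS p hp η zk xk1 Y Z hY hZ u
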